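/- arXiv:1402.2753 — 6 statements merged into one kernel-verified Lean document; each statement's English description precedes it below -/
import Mathlib

section
/- Let X be a finite abelian group (written additively) and let n ≥ 1 be an integer. For each m = (m₁,…,mₙ) ∈ ℤⁿ let φ_m : Xⁿ → X be the group homomorphism sending (x₁,…,xₙ) to Σ_{i=1}^{n} mᵢ • xᵢ. Then for all x, y ∈ Xⁿ, the element y belongs to the subgroup of Xⁿ generated by x if and only if, for every m ∈ ℤⁿ, the element φ_m(y) belongs to the subgroup of X generated by φ_m(x). -/
/-!
Both sides are statements about the homomorphisms `φ = φ_x` and `ψ = φ_y` from `ℤⁿ` to `X`: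
the right-hand side says `ψ m ∈ ⟨φ m⟩` for every `m`, and `y = r • x` says `ψ = r • φ`
(evaluate at the basis vectors). Since `ker φ ≤ ker ψ`, `ψ` factors through an endomorphism
of the finite group `range φ` sending every element into its own cyclic subgroup. Writing
`range φ ≅ ∏ ZMod (qᵢ)`, such an endomorphism multiplies the `i`-th basis vector by some `sᵢ`
and the all-ones vector by some `r`, which forces `sᵢ ≡ r (mod qᵢ)`: it is multiplication by `r`.
-/

open AddSubgroup

theorem exists_eq_zsmul_of_forall_mem_zmultiples_pi_zmod {ι : Type*} [Fintype ι]
    [DecidableEq ι] (q : ι → ℕ) (f : (∀ i, ZMod (q i)) →+ ∀ i, ZMod (q i))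
    (hf : ∀ z, f z ∈ zmultiples z) : ∃ r : ℤ, ∀ z, f z = r • z := by
  choose s hs using fun i => mem_zmultiples_iff.mp (hf (Pi.single i 1))
  obtain ⟨r, hr⟩ := mem_zmultiples_iff.mp (hf 1)
  have hf_one : f 1 = ∑ i, s i • Pi.single i 1 := by
    rw [← Finset.univ_sum_single (1 : ∀ i, ZMod (q i)), map_sum]
    exact Finset.sum_congr rfl fun i _ => (hs i).symm
  have hs_eq : ∀ i, s i • (1 : ZMod (q i)) = r • 1 := by
    intro i
    have h_i := congr_fun hf_one i
    rw [Finset.sum_apply, Finset.sum_eq_single i (fun j _ hj => by simp [Pi.single_eq_of_ne' hj])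
      (by simp)] at h_i
    simpa [← hr] using h_i.symm
  have hf_single : ∀ i, f (Pi.single i 1) = r • Pi.single i 1 := by
    intro i
    rw [← hs i, ← Pi.single_smul, ← Pi.single_smul, hs_eq]
  have hf_eq : f = r • AddMonoidHom.id _ := by
    refine AddMonoidHom.functions_ext _ _ _ fun i x => ?_
    obtain ⟨k, rfl⟩ := ZMod.intCast_surjective x
    rw [← zsmul_one, Pi.single_smul, map_zsmul, hf_single, AddMonoidHom.smul_apply,
      AddMonoidHom.id_apply, smul_comm]
  exact ⟨r, DFunLike.congr_fun hf_eq⟩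

theorem AddMonoidHom.exists_eq_zsmul_of_forall_mem_zmultiples {G : Type*} [AddCommGroup G]
    [Finite G] (f : G →+ G) (hf : ∀ z, f z ∈ zmultiples z) : ∃ r : ℤ, ∀ z, f z = r • z := by
  classical
  obtain ⟨ι, _, q, -, ⟨e⟩⟩ := AddCommGroup.equiv_directSum_zmod_of_finite' G
  let e' := e.trans (DirectSum.linearEquivFunOnFintype ℤ ι fun i => ZMod (q i)).toAddEquiv
  let f' := (e'.toAddMonoidHom.comp f).comp e'.symm.toAddMonoidHom
  have hf' : ∀ z, f' z ∈ zmultiples z := fun z => by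
    obtain ⟨k, hk⟩ := mem_zmultiples_iff.mp (hf (e'.symm z))
    refine mem_zmultiples_iff.mpr ⟨k, ?_⟩
    simp only [f', AddMonoidHom.comp_apply, AddEquiv.coe_toAddMonoidHom, ← hk, map_zsmul,
      AddEquiv.apply_symm_apply]
  obtain ⟨r, hr⟩ := exists_eq_zsmul_of_forall_mem_zmultiples_pi_zmod q f' hf'
  exact ⟨r, fun z => e'.injective (by simpa [f'] using hr (e' z))⟩

theorem AddMonoidHom.exists_eq_zsmul_of_forall_apply_mem_zmultiples {A G : Type*}
    [AddCommGroup A] [AddCommGroup G] [Finite G] (φ ψ : A →+ G) (h : ∀ a, ψ a ∈ zmultiples (φ a)) :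
    ∃ r : ℤ, ∀ a, ψ a = r • φ a := by
  have hψ_range : ∀ a, ψ a ∈ φ.range := fun a => by
    obtain ⟨k, hk⟩ := mem_zmultiples_iff.mp (h a)
    exact ⟨k • a, by rw [map_zsmul, hk]⟩
  let ψ' := ψ.codRestrict φ.range hψ_range
  have hker : φ.rangeRestrict.ker ≤ ψ'.ker := fun a ha => by
    have hφa : φ a = 0 := by simpa using ha
    simpa [ψ', hφa] using h a
  let f := φ.rangeRestrict.liftOfSurjective φ.rangeRestrict_surjective ⟨ψ', hker⟩
  have hf : ∀ a, f (φ.rangeRestrict a) = ψ' a :=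
    AddMonoidHom.liftOfRightInverse_comp_apply _ _ _ _
  obtain ⟨r, hr⟩ := f.exists_eq_zsmul_of_forall_mem_zmultiples fun z => by
    obtain ⟨a, rfl⟩ := φ.rangeRestrict_surjective z
    obtain ⟨k, hk⟩ := mem_zmultiples_iff.mp (h a)
    exact mem_zmultiples_iff.mpr ⟨k, Subtype.ext (by simp [hf, ψ', hk])⟩
  exact ⟨r, fun a => by simpa [hf, ψ'] using congr_arg Subtype.val (hr (φ.rangeRestrict a))⟩

theorem stmt0_general (X : Type*) [AddCommGroup X] [Fintype X] (n : ℕ)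
    (x y : Fin n → X) :
    y ∈ AddSubgroup.zmultiples x ↔
      ∀ m : Fin n → ℤ,
        (∑ i, m i • y i) ∈ AddSubgroup.zmultiples (∑ i, m i • x i) := by
  constructor
  · rintro ⟨r, rfl⟩ m
    refine mem_zmultiples_iff.mpr ⟨r, ?_⟩
    rw [Finset.smul_sum]
    exact Finset.sum_congr rfl fun i _ => smul_comm r (m i) (x i)
  · intro h
    obtain ⟨r, hr⟩ := AddMonoidHom.exists_eq_zsmul_of_forall_apply_mem_zmultiples
      (Fintype.linearCombination ℤ x).toAddMonoidHom (Fintype.linearCombination ℤ y).toAddMonoidHom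
      (by simpa [Fintype.linearCombination_apply] using h)
    refine ⟨r, funext fun i => ?_⟩
    simpa [Fintype.linearCombination_apply_single] using (hr (Pi.single i 1)).symm

/-- Let `X` be a finite abelian group and `n ≥ 1`. For `m ∈ ℤⁿ` let
`φ_m : Xⁿ → X` be `x ↦ ∑ i, m i • x i`. Then for `x y ∈ Xⁿ`, `y` lies in the
subgroup generated by `x` iff for every `m`, `φ_m y` lies in the subgroup
generated by `φ_m x`. -/
theorem stmt0 (X : Type*) [AddCommGroup X] [Fintype X] (n : ℕ) (hn : 1 ≤ n)
    (x y : Fin n → X) :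
    y ∈ AddSubgroup.zmultiples x ↔
      ∀ m : Fin n → ℤ,
        (∑ i, m i • y i) ∈ AddSubgroup.zmultiples (∑ i, m i • x i) :=
  stmt0_general X n x y
end

section
/- Let p be a prime and X a finite abelian p-group, written additively. Let x₁, x ∈ X with x ≠ 0. Let a be the smallest natural number with p^a • x₁ = 0 and b the smallest natural number with p^b • x = 0, and assume a ≥ b. Let h be the smallest natural number such that p^h • x belongs to the subgroup generated by x₁. Then h ≤ b, and there exists an integer u coprime to p such that p^h • x + p^{h + a − b} • (u • x₁) = 0. -/
/-!
Write `p ^ h • x = r • x₁` and put `n = b - h`. Since `x₁` has order exactly `p ^ a`, the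
relation `p ^ n • (r • x₁) = 0` forces `p ^ (a - n) ∣ r`, say `r = p ^ (a - n) * s`; and `p ∣ s`
would give `p ^ (b - 1) • x = p ^ (n - 1) • (r • x₁) = 0`, against the minimality of `b`.
Then `u = -s` works. In the degenerate case `h = b` both terms vanish and `u = 1` works.
-/

section

variable {G : Type*} [AddGroup G] {p : ℕ}

theorem addOrderOf_eq_pow_of_minimal (hp : p.Prime) {y : G} {a : ℕ} (ha : p ^ a • y = 0)
    (ha' : ∀ a' < a, p ^ a' • y ≠ 0) : addOrderOf y = p ^ a := by
  obtain ⟨k, hk, hke⟩ := (Nat.dvd_prime_pow hp).mp (addOrderOf_dvd_of_nsmul_eq_zero ha)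
  rcases hk.lt_or_eq with hlt | rfl
  · exact absurd (hke ▸ addOrderOf_nsmul_eq_zero y) (ha' k hlt)
  · exact hke

theorem natCast_pow_zsmul (n : ℕ) (y : G) : ((p : ℤ) ^ n) • y = p ^ n • y := by
  rw [← Nat.cast_pow, natCast_zsmul]

theorem exists_isCoprime_of_addOrderOf_eq_pow (hp : p.Prime) {y : G} {a n : ℕ}
    (hy : addOrderOf y = p ^ a) {r : ℤ} (hz : p ^ (n + 1) • (r • y) = 0)
    (hz' : p ^ n • (r • y) ≠ 0) :
    ∃ s : ℤ, IsCoprime s p ∧ r = p ^ (a - (n + 1)) * s := by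
  have hp0 : (p : ℤ) ≠ 0 := by exact_mod_cast hp.ne_zero
  have hdvd_iff (m : ℤ) : m • y = 0 ↔ (p : ℤ) ^ a ∣ m := by
    rw [← addOrderOf_dvd_iff_zsmul_eq_zero, hy, Nat.cast_pow]
  have hzsmul (k : ℕ) (m : ℤ) : p ^ k • (m • y) = ((p : ℤ) ^ k * m) • y := by
    rw [mul_zsmul, natCast_pow_zsmul]
  have hna : n < a := by
    by_contra! han
    exact hz' ((hzsmul n r).trans ((hdvd_iff _).mpr ((pow_dvd_pow _ han).mul_right r)))
  have hsplit : (p : ℤ) ^ a = p ^ (n + 1) * p ^ (a - (n + 1)) := by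
    rw [← pow_add, Nat.add_sub_cancel' hna]
  obtain ⟨s, rfl⟩ : (p : ℤ) ^ (a - (n + 1)) ∣ r := by
    have := (hdvd_iff _).mp ((hzsmul _ r).symm.trans hz)
    rwa [hsplit, mul_dvd_mul_iff_left (pow_ne_zero _ hp0)] at this
  refine ⟨s, ?_, rfl⟩
  refine ((Nat.prime_iff_prime_int.mp hp).coprime_iff_not_dvd.mpr ?_).symm
  rintro ⟨t, rfl⟩
  apply hz'
  rw [hzsmul, hdvd_iff, hsplit, pow_succ]
  exact ⟨t, by ring⟩

end

theorem stmt2_general (p : ℕ) (hp : p.Prime) (X : Type*) [AddCommGroup X]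
    (x₁ x : X) (a b h : ℕ)
    (ha : p ^ a • x₁ = 0) (ha' : ∀ a' < a, p ^ a' • x₁ ≠ 0)
    (hb : p ^ b • x = 0) (hb' : ∀ b' < b, p ^ b' • x ≠ 0)
    (hh : p ^ h • x ∈ AddSubgroup.zmultiples x₁)
    (hh' : ∀ h' < h, p ^ h' • x ∉ AddSubgroup.zmultiples x₁) :
    h ≤ b ∧ ∃ u : ℤ, IsCoprime u (p : ℤ) ∧
      p ^ h • x + p ^ (h + a - b) • (u • x₁) = 0 := by
  have hhb : h ≤ b := le_of_not_gt fun hbh => hh' b hbh (hb ▸ zero_mem _)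
  refine ⟨hhb, ?_⟩
  rcases hhb.eq_or_lt with rfl | hhb
  · exact ⟨1, isCoprime_one_left, by rw [Nat.add_sub_cancel_left, hb, one_zsmul, ha, add_zero]⟩
  obtain ⟨r, hr⟩ := AddSubgroup.mem_zmultiples_iff.mp hh
  have hpow (k : ℕ) : p ^ k • (r • x₁) = p ^ (h + k) • x := by
    rw [hr, ← mul_nsmul', ← pow_add, add_comm]
  obtain ⟨s, hs, rfl⟩ := exists_isCoprime_of_addOrderOf_eq_pow (n := b - h - 1) hp
    (addOrderOf_eq_pow_of_minimal hp ha ha')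
    (by rw [hpow, show h + (b - h - 1 + 1) = b by omega, hb])
    (by rw [hpow]; exact hb' _ (by omega))
  refine ⟨-s, hs.neg_left, ?_⟩
  rw [← hr, ← natCast_pow_zsmul, smul_smul, ← add_smul, show a - (b - h - 1 + 1) = h + a - b by omega]
  simp

/-- Let `p` be prime, `X` a finite abelian `p`-group, `x₁ x ∈ X` with `x ≠ 0`,
`a` (resp. `b`) the smallest natural number with `p ^ a • x₁ = 0`
(resp. `p ^ b • x = 0`), with `a ≥ b`, and `h` the smallest natural number such
that `p ^ h • x` lies in the subgroup generated by `x₁`. Then `h ≤ b` and there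
is an integer `u` coprime to `p` with `p ^ h • x + p ^ (h + a - b) • (u • x₁) = 0`. -/
theorem stmt2 (p : ℕ) (hp : p.Prime) (X : Type*) [AddCommGroup X] [Fintype X]
    (hpgrp : ∀ g : X, ∃ k : ℕ, p ^ k • g = 0)
    (x₁ x : X) (hx : x ≠ 0) (a b h : ℕ)
    (ha : p ^ a • x₁ = 0) (ha' : ∀ a' < a, p ^ a' • x₁ ≠ 0)
    (hb : p ^ b • x = 0) (hb' : ∀ b' < b, p ^ b' • x ≠ 0)
    (hab : b ≤ a)
    (hh : p ^ h • x ∈ AddSubgroup.zmultiples x₁)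
    (hh' : ∀ h' < h, p ^ h' • x ∉ AddSubgroup.zmultiples x₁) :
    h ≤ b ∧ ∃ u : ℤ, IsCoprime u (p : ℤ) ∧
      p ^ h • x + p ^ (h + a - b) • (u • x₁) = 0 :=
  stmt2_general p hp X x₁ x a b h ha ha' hb hb' hh hh'
end

section
/- Let p be a prime and X a finite abelian p-group, written additively. Let x₁, x ∈ X with x ≠ 0. Let a be the smallest natural number with p^a • x₁ = 0 and b the smallest natural number with p^b • x = 0, and assume a ≥ b. Let h be the smallest natural number such that p^h • x belongs to the subgroup generated by x₁, and let u be an integer coprime to p satisfying p^h • x + p^{h + a − b} • (u • x₁) = 0. Set z = x + p^{a − b} • (u • x₁). Then the map ℤ/p^aℤ ⊕ ℤ/p^hℤ → X, (e, f) ↦ e • x₁ + f • z, is injective; equivalently, for all integers e, f, if e • x₁ + f • z = 0 then p^a divides e and p^h divides f. -/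
/-!
Since `z ≡ x` modulo `⟨x₁⟩`, a relation `e • x₁ + f • z = 0` puts `f • x` in `⟨x₁⟩`, so the
minimality of `h` gives `p ^ h ∣ f`. As `p ^ h • z = 0`, the relation then reduces to
`e • x₁ = 0`, and the minimality of `a` gives `p ^ a ∣ e`.
-/

/-- The order of the class of `x` in `X ⧸ S` is a power of `p` that is at least `p ^ h`. -/
theorem pow_dvd_of_zsmul_mem {p : ℕ} (hp : p.Prime) {X : Type*} [AddCommGroup X] {x : X}
    {S : AddSubgroup X} {n h : ℕ} (hn : p ^ n • x ∈ S) (hmin : ∀ h' < h, p ^ h' • x ∉ S)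
    {m : ℤ} (hm : m • x ∈ S) : (p : ℤ) ^ h ∣ m := by
  set y : X ⧸ S := QuotientAddGroup.mk x
  have hy : p ^ n • y = 0 := (QuotientAddGroup.eq_zero_iff _).2 hn
  obtain ⟨k, -, hk⟩ := (Nat.dvd_prime_pow hp).1 (addOrderOf_dvd_of_nsmul_eq_zero hy)
  have hhk : h ≤ k := not_lt.1 fun hlt =>
    hmin k hlt <| (QuotientAddGroup.eq_zero_iff _).1 (hk ▸ addOrderOf_nsmul_eq_zero y)
  have hym : (addOrderOf y : ℤ) ∣ m :=
    addOrderOf_dvd_iff_zsmul_eq_zero.2 ((QuotientAddGroup.eq_zero_iff _).2 hm)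
  rw [hk] at hym
  exact (pow_dvd_pow _ hhk).trans (by exact_mod_cast hym)

theorem stmt3_general (p : ℕ) (hp : p.Prime) (X : Type*) [AddCommGroup X]
    (x₁ x : X) (a b h : ℕ)
    (ha : p ^ a • x₁ = 0) (ha' : ∀ a' < a, p ^ a' • x₁ ≠ 0)
    (hab : b ≤ a)
    (hh : p ^ h • x ∈ AddSubgroup.zmultiples x₁)
    (hh' : ∀ h' < h, p ^ h' • x ∉ AddSubgroup.zmultiples x₁)
    (u : ℤ)
    (hux : p ^ h • x + p ^ (h + a - b) • (u • x₁) = 0)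
    (z : X) (hz : z = x + p ^ (a - b) • (u • x₁)) :
    ∀ e f : ℤ, e • x₁ + f • z = 0 → (p : ℤ) ^ a ∣ e ∧ (p : ℤ) ^ h ∣ f := by
  intro e f hef
  have hfx : f • x ∈ AddSubgroup.zmultiples x₁ := by
    refine ⟨-e - f * p ^ (a - b) * u, ?_⟩
    rw [hz, smul_add] at hef
    change (-e - f * p ^ (a - b) * u) • x₁ = f • x
    rw [sub_smul, neg_smul, mul_smul, mul_smul, ← Nat.cast_pow, natCast_zsmul]
    linear_combination (norm := abel) -hef
  have hf : (p : ℤ) ^ h ∣ f := pow_dvd_of_zsmul_mem hp hh hh' hfx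
  have hz0 : p ^ h • z = 0 := by
    rwa [hz, smul_add, smul_smul, ← pow_add, ← Nat.add_sub_assoc hab]
  have hfz : f • z = 0 := addOrderOf_dvd_iff_zsmul_eq_zero.1 <|
    (Int.natCast_dvd_natCast.2 (addOrderOf_dvd_of_nsmul_eq_zero hz0)).trans (by exact_mod_cast hf)
  have he : (p : ℤ) ^ a ∣ e :=
    pow_dvd_of_zsmul_mem (S := ⊥) hp (by simpa using ha) (by simpa using ha')
      (by simpa [hfz] using hef)
  exact ⟨he, hf⟩

/-- With the setup of the previous statement, let `u` be an integer coprime to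
`p` with `p ^ h • x + p ^ (h + a - b) • (u • x₁) = 0` and set
`z = x + p ^ (a - b) • (u • x₁)`. Then the map
`ℤ/p^aℤ ⊕ ℤ/p^hℤ → X, (e, f) ↦ e • x₁ + f • z` is injective; equivalently,
for all integers `e f`, if `e • x₁ + f • z = 0` then `p ^ a ∣ e` and `p ^ h ∣ f`. -/
theorem stmt3 (p : ℕ) (hp : p.Prime) (X : Type*) [AddCommGroup X] [Fintype X]
    (hpgrp : ∀ g : X, ∃ k : ℕ, p ^ k • g = 0)
    (x₁ x : X) (hx : x ≠ 0) (a b h : ℕ)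
    (ha : p ^ a • x₁ = 0) (ha' : ∀ a' < a, p ^ a' • x₁ ≠ 0)
    (hb : p ^ b • x = 0) (hb' : ∀ b' < b, p ^ b' • x ≠ 0)
    (hab : b ≤ a)
    (hh : p ^ h • x ∈ AddSubgroup.zmultiples x₁)
    (hh' : ∀ h' < h, p ^ h' • x ∉ AddSubgroup.zmultiples x₁)
    (u : ℤ) (hu : IsCoprime u (p : ℤ))
    (hux : p ^ h • x + p ^ (h + a - b) • (u • x₁) = 0)
    (z : X) (hz : z = x + p ^ (a - b) • (u • x₁)) :
    ∀ e f : ℤ, e • x₁ + f • z = 0 → (p : ℤ) ^ a ∣ e ∧ (p : ℤ) ^ h ∣ f :=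
  stmt3_general p hp X x₁ x a b h ha ha' hab hh hh' u hux z hz
end

section
/- Let p be a prime and X a finite abelian p-group, written additively. Let x₁, x ∈ X, let a be the smallest natural number with p^a • x₁ = 0 and b the smallest natural number with p^b • x = 0, and assume a ≥ b. Let r be an integer and suppose that for every integer m, the element r • x belongs to the subgroup of X generated by m • x₁ + x. Then p^b divides r; in particular r • x = 0. -/
/-!
Put `z := p ^ (a - b) • x₁`, of exact order `p ^ b` like `x`, and `w := p ^ (b - 1) • x`.
If `p ^ b ∤ r`, Bezout puts `w` in `⟨r • x⟩`, hence in every `⟨k • z + x⟩`. That is impossible: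
whenever `y = k • z + x` has order `p ^ (j + 1)`, `w` is a unit multiple of `p ^ j • y`, and
after rescaling by the inverse unit modulo `p ^ b` this yields some `k'` with
`p ^ j • (k' • z + x) = 0`. Descending from `j = b - 1` (started at `k = 1`, where the order of
`z` excludes the degenerate case) ends with `k • z + x = 0`, whose multiples miss `w ≠ 0`.
-/

open AddSubgroup

section

variable {X : Type*} [AddCommGroup X] {p : ℕ}

theorem exists_zsmul_zsmul_eq_self_of_not_dvd (hp : p.Prime) {b : ℕ} {x : X}
    (hx : p ^ b • x = 0) {u : ℤ} (hu : ¬(p : ℤ) ∣ u) : ∃ v : ℤ, v • u • x = x := by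
  obtain ⟨t, v, htv⟩ : IsCoprime ((p : ℤ) ^ b) u :=
    ((Nat.prime_iff_prime_int.mp hp).coprime_iff_not_dvd.mpr hu).pow_left
  refine ⟨v, ?_⟩
  have hx' : ((p : ℤ) ^ b) • x = 0 := by rw [← Nat.cast_pow, natCast_zsmul, hx]
  calc v • u • x = (1 - t * (p : ℤ) ^ b) • x := by rw [smul_smul, ← htv]; ring_nf
    _ = x := by rw [sub_smul, one_smul, mul_smul, hx', smul_zero, sub_zero]

theorem exists_nsmul_zsmul_add_eq_zero_of_not_dvd (hp : p.Prime) {b i : ℕ} {x z : X}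
    (hx : p ^ b • x = 0) {k u : ℤ} (hu : ¬(p : ℤ) ∣ u) (h : p ^ i • (k • z + u • x) = 0) :
    ∃ k' : ℤ, p ^ i • (k' • z + x) = 0 := by
  obtain ⟨v, hv⟩ := exists_zsmul_zsmul_eq_self_of_not_dvd hp hx hu
  refine ⟨v * k, ?_⟩
  rw [← hv, mul_smul, ← smul_add, smul_comm, h, smul_zero]

theorem exists_eq_zsmul_pow_nsmul_of_mem_zmultiples (hp : p.Prime) {j : ℕ} {y w : X}
    (hy : p ^ j • y ≠ 0) (hy' : p ^ (j + 1) • y = 0) (hw : w ∈ zmultiples y)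
    (hpw : p • w = 0) : ∃ u : ℤ, w = u • p ^ j • y := by
  have := Fact.mk hp
  obtain ⟨s, rfl⟩ := mem_zmultiples_iff.mp hw
  have hdvd : (p : ℤ) ^ j * p ∣ s * p := by
    rw [← pow_succ, ← Nat.cast_pow, ← addOrderOf_eq_prime_pow hy hy',
      addOrderOf_dvd_iff_zsmul_eq_zero, mul_comm, mul_smul, natCast_zsmul, hpw]
  obtain ⟨u, hu⟩ := (mul_dvd_mul_iff_right (by exact_mod_cast hp.ne_zero)).mp hdvd
  exact ⟨u, by rw [hu, mul_comm, mul_smul, ← Nat.cast_pow, natCast_zsmul]⟩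

theorem pow_pred_nsmul_mem_zmultiples_zsmul (hp : p.Prime) {b : ℕ} {x : X} {r : ℤ}
    (hx : p ^ b • x = 0) (hr : ¬(p : ℤ) ^ b ∣ r) : p ^ (b - 1) • x ∈ zmultiples (r • x) := by
  have hg : r.gcd ((p : ℤ) ^ b) ∣ p ^ b := by
    exact_mod_cast Int.gcd_dvd_right (a := r) (b := (p : ℤ) ^ b)
  obtain ⟨i, hi, hgi⟩ := (Nat.dvd_prime_pow hp).mp hg
  have hib : i < b := by
    refine lt_of_le_of_ne hi fun h => hr ?_
    have := Int.gcd_dvd_left (a := r) (b := (p : ℤ) ^ b)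
    rwa [hgi, h, Nat.cast_pow] at this
  obtain ⟨q, hq⟩ : (r.gcd ((p : ℤ) ^ b) : ℤ) ∣ (p : ℤ) ^ (b - 1) := by
    rw [hgi]; exact_mod_cast Nat.pow_dvd_pow p (by omega)
  have hx' : ((p : ℤ) ^ b) • x = 0 := by rw [← Nat.cast_pow, natCast_zsmul, hx]
  refine mem_zmultiples_iff.mpr ⟨r.gcdA ((p : ℤ) ^ b) * q, ?_⟩
  rw [← natCast_zsmul, Nat.cast_pow, hq, Int.gcd_eq_gcd_ab]
  linear_combination (norm := module) (-r.gcdB ((p : ℤ) ^ b) * q) • hx'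

theorem exists_pow_nsmul_zsmul_add_eq_zero_of_succ (hp : p.Prime) {b j : ℕ} {x z : X}
    (hx : p ^ b • x = 0) (hx' : p ^ (b - 1) • x ≠ 0)
    (hW : ∀ k : ℤ, p ^ (b - 1) • x ∈ zmultiples (k • z + x)) (hj : j + 1 < b) {k : ℤ}
    (hk : p ^ (j + 1) • (k • z + x) = 0) : ∃ k' : ℤ, p ^ j • (k' • z + x) = 0 := by
  by_cases hk' : p ^ j • (k • z + x) = 0
  · exact ⟨k, hk'⟩
  have hpW : p • p ^ (b - 1) • x = 0 := by
    rw [smul_smul, ← pow_succ', Nat.sub_add_cancel (by omega), hx]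
  obtain ⟨u, hu⟩ := exists_eq_zsmul_pow_nsmul_of_mem_zmultiples hp hk' hk (hW k) hpW
  have hpu : ¬(p : ℤ) ∣ u := by
    rintro ⟨u', rfl⟩
    rw [mul_smul, natCast_zsmul, smul_comm p u', smul_smul, ← pow_succ', hk, smul_zero] at hu
    exact hx' hu
  have hsplit : p ^ (b - 1) • x = p ^ j • p ^ (b - 1 - j) • x := by
    rw [smul_smul, ← pow_add, Nat.add_sub_cancel' (by omega)]
  refine exists_nsmul_zsmul_add_eq_zero_of_not_dvd hp hx (k := u * k)
    (u := u - (p : ℤ) ^ (b - 1 - j)) (fun h => hpu ?_) ?_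
  · simpa using dvd_add h (dvd_pow_self (p : ℤ) (by omega : b - 1 - j ≠ 0))
  · rw [hsplit] at hu
    rw [← Nat.cast_pow]
    linear_combination (norm := module) -hu

theorem exists_pow_pred_nsmul_zsmul_add_eq_zero (hp : p.Prime) {b : ℕ} {x z : X} (hb : b ≠ 0)
    (hz : p ^ b • z = 0) (hz' : p ^ (b - 1) • z ≠ 0) (hx : p ^ b • x = 0)
    (hW : ∀ k : ℤ, p ^ (b - 1) • x ∈ zmultiples (k • z + x)) :
    ∃ k : ℤ, p ^ (b - 1) • (k • z + x) = 0 := by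
  have hpow : ∀ y : X, p ^ b • y = p • p ^ (b - 1) • y := fun y => by
    rw [smul_smul, ← pow_succ', Nat.sub_add_cancel (Nat.one_le_iff_ne_zero.mpr hb)]
  by_cases h1 : p ^ (b - 1) • ((1 : ℤ) • z + x) = 0
  · exact ⟨1, h1⟩
  obtain ⟨u, hu⟩ := exists_eq_zsmul_pow_nsmul_of_mem_zmultiples hp h1
    (by rw [Nat.sub_add_cancel (Nat.one_le_iff_ne_zero.mpr hb), smul_add, smul_comm, hz,
      smul_zero, hx, zero_add]) (hW 1) (by rw [← hpow, hx])
  by_cases hu1 : (p : ℤ) ∣ u - 1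
  · have hpu : ¬(p : ℤ) ∣ u := fun h =>
      (Nat.prime_iff_prime_int.mp hp).not_dvd_one (by simpa using dvd_sub h hu1)
    obtain ⟨c, hc⟩ := hu1
    obtain ⟨v, hv⟩ := exists_zsmul_zsmul_eq_self_of_not_dvd hp (b := 1) (x := p ^ (b - 1) • z)
      (by rw [pow_one, ← hpow, hz]) hpu
    have hW0 : (u - 1) • p ^ (b - 1) • x = 0 := by
      rw [hc, mul_smul, natCast_zsmul, smul_comm, ← hpow, hx, smul_zero]
    refine absurd ?_ hz'
    rw [← hv]
    rw [one_smul] at hu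
    linear_combination (norm := module) -v • hu - v • hW0
  · refine exists_nsmul_zsmul_add_eq_zero_of_not_dvd hp hx (k := u) hu1 ?_
    linear_combination (norm := module) -hu

theorem exists_pow_pred_nsmul_notMem_zmultiples (hp : p.Prime) {b : ℕ} {x z : X} (hb : b ≠ 0)
    (hz : p ^ b • z = 0) (hz' : p ^ (b - 1) • z ≠ 0) (hx : p ^ b • x = 0)
    (hx' : p ^ (b - 1) • x ≠ 0) : ∃ k : ℤ, p ^ (b - 1) • x ∉ zmultiples (k • z + x) := by
  by_contra! hW
  have hdescent : ∀ i ≤ b - 1, ∃ k : ℤ, p ^ (b - 1 - i) • (k • z + x) = 0 := by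
    intro i hi
    induction i with
    | zero => exact exists_pow_pred_nsmul_zsmul_add_eq_zero hp hb hz hz' hx hW
    | succ i ih =>
      obtain ⟨k, hk⟩ := ih (by omega)
      exact exists_pow_nsmul_zsmul_add_eq_zero_of_succ hp hx hx' hW (by omega)
        (k := k) (by rwa [show b - 1 - (i + 1) + 1 = b - 1 - i by omega])
  obtain ⟨k, hk⟩ := hdescent (b - 1) le_rfl
  rw [Nat.sub_self, pow_zero, one_smul] at hk
  exact hx' (by simpa [hk] using hW k)

end

theorem stmt4_general (p : ℕ) (hp : p.Prime) (X : Type*) [AddCommGroup X]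
    (x₁ x : X) (a b : ℕ)
    (ha : p ^ a • x₁ = 0) (ha' : ∀ a' < a, p ^ a' • x₁ ≠ 0)
    (hb : p ^ b • x = 0) (hb' : ∀ b' < b, p ^ b' • x ≠ 0)
    (hab : b ≤ a) (r : ℤ)
    (hr : ∀ m : ℤ, r • x ∈ AddSubgroup.zmultiples (m • x₁ + x)) :
    (p : ℤ) ^ b ∣ r ∧ r • x = 0 := by
  have hdvd : (p : ℤ) ^ b ∣ r := by
    by_contra hndvd
    have hb0 : b ≠ 0 := by rintro rfl; simp at hndvd
    obtain ⟨k, hk⟩ := exists_pow_pred_nsmul_notMem_zmultiples hp hb0 (z := p ^ (a - b) • x₁)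
      (by rw [smul_smul, ← pow_add, Nat.add_sub_cancel' hab, ha])
      (by rw [smul_smul, ← pow_add]; exact ha' _ (by omega)) hb (hb' _ (by omega))
    refine hk (zmultiples_le_of_mem ?_ (pow_pred_nsmul_mem_zmultiples_zsmul hp hb hndvd))
    simpa only [smul_smul, ← natCast_zsmul, ← mul_smul] using hr (k * (p ^ (a - b) : ℕ))
  obtain ⟨t, rfl⟩ := hdvd
  refine ⟨⟨t, rfl⟩, ?_⟩
  rw [mul_comm, mul_smul, ← Nat.cast_pow, natCast_zsmul, hb, smul_zero]

/-- Let `p` be prime, `X` a finite abelian `p`-group, `x₁ x ∈ X`, `a` (resp.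
`b`) the smallest natural number with `p ^ a • x₁ = 0` (resp. `p ^ b • x = 0`),
with `a ≥ b`. Let `r` be an integer such that for every integer `m`, `r • x`
lies in the subgroup generated by `m • x₁ + x`. Then `p ^ b` divides `r`; in
particular `r • x = 0`. -/
theorem stmt4 (p : ℕ) (hp : p.Prime) (X : Type*) [AddCommGroup X] [Fintype X]
    (hpgrp : ∀ g : X, ∃ k : ℕ, p ^ k • g = 0)
    (x₁ x : X) (a b : ℕ)
    (ha : p ^ a • x₁ = 0) (ha' : ∀ a' < a, p ^ a' • x₁ ≠ 0)
    (hb : p ^ b • x = 0) (hb' : ∀ b' < b, p ^ b' • x ≠ 0)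
    (hab : b ≤ a) (r : ℤ)
    (hr : ∀ m : ℤ, r • x ∈ AddSubgroup.zmultiples (m • x₁ + x)) :
    (p : ℤ) ^ b ∣ r ∧ r • x = 0 :=
  stmt4_general p hp X x₁ x a b ha ha' hb hb' hab r hr
end

section
/- Let D be an abelian group (written multiplicatively) and D_c a subgroup of D such that the quotient group D/D_c is a free abelian group of finite rank. Let T be a subgroup of D and U a subgroup of T of finite index in T. Assume there exists an integer N₁ ≥ 1 such that every element of T of the form d^{N₁} with d ∈ D_c belongs to U. Then there exists an integer N ≥ 1 such that every element of T of the form d^{N} with d ∈ D belongs to U. -/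
/-!
Since `D ⧸ D_c` is finitely generated, the torsion of `(D ⧸ D_c) ⧸ image(T)` is finite, killed by
some `e`; so if `d ^ N ∈ T` then `d ^ e = t * c` with `t ∈ T`, `c ∈ D_c`. With `m = [T : U]` and
`N = e * m * N₁`, we get `t ^ (m * N₁) ∈ U`, while `c ^ (m * N₁) = (c ^ m) ^ N₁` lies in `T`
(it is `d ^ N * t ^ (-m * N₁)`), hence in `U` by hypothesis.
-/

theorem AddCommGroup.exists_nsmul_eq_zero_of_nsmul_eq_zero (M : Type*) [AddCommGroup M]
    [Module.Finite ℤ M] :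
    ∃ e : ℕ, 0 < e ∧ ∀ y : M, ∀ k : ℕ, k ≠ 0 → k • y = 0 → e • y = 0 := by
  let tM := Submodule.torsion ℤ M
  have : Finite tM := Module.finite_of_fg_torsion tM Submodule.torsion_isTorsion
  refine ⟨Nat.card tM, Nat.card_pos, fun y k hk hky => ?_⟩
  have hy : y ∈ tM := (Submodule.mem_torsion_iff y).mpr
    ⟨⟨k, mem_nonZeroDivisors_of_ne_zero (by exact_mod_cast hk)⟩, by simpa using hky⟩
  simpa using congrArg Subtype.val (card_nsmul_eq_zero' (G := tM) (x := ⟨y, hy⟩))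

theorem Subgroup.exists_pow_mem_of_pow_mem {A : Type*} [CommGroup A] [Group.FG A]
    (H : Subgroup A) : ∃ e : ℕ, 0 < e ∧ ∀ x : A, ∀ k : ℕ, k ≠ 0 → x ^ k ∈ H → x ^ e ∈ H := by
  have : Module.Finite ℤ (Additive (A ⧸ H)) := Module.Finite.iff_addGroup_fg.mpr inferInstance
  obtain ⟨e, he, hsat⟩ := AddCommGroup.exists_nsmul_eq_zero_of_nsmul_eq_zero (Additive (A ⧸ H))
  refine ⟨e, he, fun x k hk hxk => ?_⟩
  have := hsat (Additive.ofMul (x : A ⧸ H)) k hk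
  simp only [← ofMul_pow, ← QuotientGroup.mk_pow, ofMul_eq_zero, QuotientGroup.eq_one_iff] at this
  exact this hxk

theorem exists_pow_mem_of_fg_quotient {D : Type*} [CommGroup D] (Dc T U : Subgroup D)
    [Group.FG (D ⧸ Dc)] [(U.subgroupOf T).FiniteIndex] {N₁ : ℕ} (hN₁ : 0 < N₁)
    (hDc : ∀ d ∈ Dc, d ^ N₁ ∈ T → d ^ N₁ ∈ U) :
    ∃ N : ℕ, 0 < N ∧ ∀ d : D, d ^ N ∈ T → d ^ N ∈ U := by
  obtain ⟨e, he, hsat⟩ := (T.map (QuotientGroup.mk' Dc)).exists_pow_mem_of_pow_mem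
  set M := U.relIndex T * N₁ with hM
  have hMpos : 0 < M := Nat.mul_pos (Nat.pos_of_ne_zero Subgroup.FiniteIndex.index_ne_zero) hN₁
  have hpowM : ∀ t ∈ T, t ^ M ∈ U := fun t ht => by
    rw [hM, pow_mul]
    exact U.pow_mem (U.pow_relIndex_mem ht) N₁
  refine ⟨e * M, Nat.mul_pos he hMpos, fun d hd => ?_⟩
  obtain ⟨t, ht, hte⟩ : ((d : D ⧸ Dc) ^ e) ∈ T.map (QuotientGroup.mk' Dc) :=
    hsat _ _ (Nat.mul_pos he hMpos).ne' (by simpa using T.mem_map_of_mem (QuotientGroup.mk' Dc) hd)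
  set c := t⁻¹ * d ^ e
  have hc : c ∈ Dc := QuotientGroup.eq.mp (by simpa using hte)
  have hdc : d ^ (e * M) = t ^ M * c ^ M := by
    rw [← mul_pow, mul_inv_cancel_left, pow_mul]
  have hcM : c ^ M ∈ U := by
    rw [hM, pow_mul]
    refine hDc _ (Dc.pow_mem hc _) ?_
    rw [← pow_mul, ← hM, eq_inv_mul_of_mul_eq hdc.symm]
    exact T.mul_mem (T.inv_mem (T.pow_mem ht M)) hd
  rw [hdc]
  exact U.mul_mem (hpowM t ht) hcM

theorem stmt5_general (D : Type*) [CommGroup D] (Dc T U : Subgroup D)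
    (hfree : ∃ n : ℕ, Nonempty ((D ⧸ Dc) ≃* Multiplicative (Fin n → ℤ)))
    (hfin : (U.subgroupOf T).FiniteIndex)
    (hN₁ : ∃ N₁ : ℕ, 1 ≤ N₁ ∧ ∀ d ∈ Dc, d ^ N₁ ∈ T → d ^ N₁ ∈ U) :
    ∃ N : ℕ, 1 ≤ N ∧ ∀ d : D, d ^ N ∈ T → d ^ N ∈ U := by
  obtain ⟨n, ⟨φ⟩⟩ := hfree
  obtain ⟨N₁, hN₁pos, hN₁⟩ := hN₁
  have : AddGroup.FG (Fin n → ℤ) := Module.Finite.iff_addGroup_fg.mp inferInstance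
  have : Group.FG (D ⧸ Dc) := Group.fg_of_surjective (f := φ.symm.toMonoidHom) φ.symm.surjective
  exact exists_pow_mem_of_fg_quotient Dc T U hN₁pos hN₁

/-- Let `D` be an abelian group and `D_c ≤ D` a subgroup with `D / D_c` free
abelian of finite rank. Let `T ≤ D` be a subgroup and `U ≤ T` a subgroup of
finite index in `T`. If there is an integer `N₁ ≥ 1` such that every element
of `T` of the form `d ^ N₁` with `d ∈ D_c` belongs to `U`, then there is an
integer `N ≥ 1` such that every element of `T` of the form `d ^ N` with
`d ∈ D` belongs to `U`. -/
theorem stmt5 (D : Type*) [CommGroup D] (Dc T U : Subgroup D)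
    (hfree : ∃ n : ℕ, Nonempty ((D ⧸ Dc) ≃* Multiplicative (Fin n → ℤ)))
    (hUT : U ≤ T) (hfin : (U.subgroupOf T).FiniteIndex)
    (hN₁ : ∃ N₁ : ℕ, 1 ≤ N₁ ∧ ∀ d ∈ Dc, d ^ N₁ ∈ T → d ^ N₁ ∈ U) :
    ∃ N : ℕ, 1 ≤ N ∧ ∀ d : D, d ^ N ∈ T → d ^ N ∈ U :=
  stmt5_general D Dc T U hfree hfin hN₁
end

section
/- Let a ≥ 1 and let U be an open subgroup of finite index of the topological group (ℝˣ)ᵃ. Then there exist a matrix A ∈ GLₐ(ℤ) and a natural number e with 0 ≤ e ≤ a such that the automorphism φ_A of (ℝˣ)ᵃ defined by φ_A(x)_i = ∏_{j=1}^{a} x_j^{A_{ij}} maps U onto the subgroup {x ∈ (ℝˣ)ᵃ : x_i > 0 for all i ≤ e}; in particular U contains the subgroup of all tuples with every coordinate positive. -/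
/-! Tuples with positive coordinates are `n`-th powers for every `n`, so a subgroup `U` of finite
index contains all of them, and `U` is the preimage of its image `S ≤ 𝔽₂ᵃ` under the
coordinatewise sign map `σ`. As `σ (φ_A x) = Ā σ x` for the reduction `Ā` of `A` mod 2, it
suffices that `Ā` maps `S` onto a coordinate subspace `{v | v i = 0 for i < e}`. Linear algebra
over `𝔽₂` gives such an invertible matrix, and it lifts to `GLₐ(ℤ)` because `GLₐ(𝔽₂)` is
generated by transvections. -/
open Matrix Module

theorem Finset.prod_zpow_eq_zpow_sum {G ι : Type*} [CommGroup G] (s : Finset ι) (f : ι → ℤ)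
    (y : G) : ∏ j ∈ s, y ^ f j = y ^ ∑ j ∈ s, f j := by
  simpa only [zpowersHom_apply, toAdd_prod, toAdd_ofAdd] using
    (map_prod (zpowersHom G y) (fun j => Multiplicative.ofAdd (f j)) s).symm

section MonomialMap

variable {G : Type*} [CommGroup G] {l m n : Type*} [Fintype n]

def monomialMap (A : Matrix m n ℤ) (x : n → G) : m → G := fun i => ∏ j, x j ^ A i j

theorem monomialMap_mul [Fintype m] (A : Matrix l m ℤ) (B : Matrix m n ℤ) (x : n → G) :
    monomialMap (A * B) x = monomialMap A (monomialMap B x) := by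
  funext i
  simp only [monomialMap, mul_apply, ← Finset.prod_zpow_eq_zpow_sum, ← Finset.prod_zpow,
    ← _root_.zpow_mul]
  rw [Finset.prod_comm]
  simp only [mul_comm]

theorem monomialMap_one [DecidableEq n] (x : n → G) : monomialMap (1 : Matrix n n ℤ) x = x := by
  funext i
  simp [monomialMap, one_apply]

theorem image_monomialMap [DecidableEq n] {A : Matrix n n ℤ} (hA : IsUnit A.det)
    (s : Set (n → G)) : monomialMap A '' s = monomialMap A⁻¹ ⁻¹' s :=
  congrFun (Set.image_eq_preimage_of_inverse
    (fun x => by rw [← monomialMap_mul, nonsing_inv_mul _ hA, monomialMap_one])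
    (fun x => by rw [← monomialMap_mul, mul_nonsing_inv _ hA, monomialMap_one])) s

theorem toAdd_map_monomialMap {R : Type*} [CommRing R] (f : G →* Multiplicative R)
    (A : Matrix m n ℤ) (x : n → G) (i : m) :
    (f (monomialMap A x i)).toAdd = (A.map (Int.cast : ℤ → R) *ᵥ fun j => (f (x j)).toAdd) i := by
  simp [monomialMap, mulVec, dotProduct, toAdd_prod, zsmul_eq_mul]

end MonomialMap

noncomputable def signBit : ℝˣ →* Multiplicative (ZMod 2) where
  toFun u := .ofAdd (if 0 < (u : ℝ) then 0 else 1)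
  map_one' := by simp
  map_mul' u v := by
    rcases lt_or_gt_of_ne u.ne_zero with hu | hu <;>
      rcases lt_or_gt_of_ne v.ne_zero with hv | hv <;>
      simp +decide [hu, hv, hu.not_gt, hv.not_gt, mul_pos_iff, ← ofAdd_add]

noncomputable def signVec (ι : Type*) : (ι → ℝˣ) →* Multiplicative (ι → ZMod 2) where
  toFun x := .ofAdd fun i => (signBit (x i)).toAdd
  map_one' := by ext; simp
  map_mul' x y := by ext; simp

theorem toAdd_signVec_eq_zero_iff {ι : Type*} {x : ι → ℝˣ} {i : ι} :
    (signVec ι x).toAdd i = 0 ↔ 0 < (x i : ℝ) := by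
  simp [signVec, signBit]

theorem signVec_monomialMap {m n : Type*} [Fintype n] (A : Matrix m n ℤ) (x : n → ℝˣ) :
    signVec m (monomialMap A x) =
      .ofAdd (A.map (Int.cast : ℤ → ZMod 2) *ᵥ (signVec n x).toAdd) := by
  ext i
  exact toAdd_map_monomialMap signBit A x i

theorem Subgroup.mem_of_forall_pos {ι : Type*} (U : Subgroup (ι → ℝˣ)) [U.FiniteIndex]
    {x : ι → ℝˣ} (hx : ∀ i, 0 < (x i : ℝ)) : x ∈ U := by
  have hn : U.index ≠ 0 := FiniteIndex.index_ne_zero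
  let y : ι → ℝˣ := fun i =>
    Units.mk0 ((x i : ℝ) ^ (U.index⁻¹ : ℝ)) (Real.rpow_pos_of_pos (hx i) _).ne'
  have hyx : y ^ U.index = x := by
    ext i
    exact Real.rpow_inv_natCast_pow (hx i).le hn
  exact hyx ▸ U.pow_index_mem y

theorem Subgroup.mem_iff_signVec_mem_map {ι : Type*} (U : Subgroup (ι → ℝˣ)) [U.FiniteIndex]
    {x : ι → ℝˣ} : x ∈ U ↔ signVec ι x ∈ U.map (signVec ι) := by
  rw [← Subgroup.mem_comap, Subgroup.comap_map_eq_self]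
  intro y hy
  exact U.mem_of_forall_pos fun i => toAdd_signVec_eq_zero_iff.1 (congrFun hy i)

theorem Submodule.exists_finBasis_mem_iff_repr_eq_zero {K V : Type*} [Field K] [AddCommGroup V]
    [Module K V] [FiniteDimensional K V] (S : Submodule K V) {n : ℕ} (hn : finrank K V = n) :
    ∃ e ≤ n, ∃ b : Basis (Fin n) K V, ∀ v, v ∈ S ↔ ∀ i : Fin n, (i : ℕ) < e → b.repr v i = 0 := by
  obtain ⟨T, hST⟩ := S.exists_isCompl
  have hdim : finrank K T + finrank K S = n := by
    rw [add_comm, Submodule.finrank_add_eq_of_isCompl hST, hn]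
  let π := (Submodule.prodEquivOfIsCompl T S hST.symm).symm
  let bT := finBasisOfFinrankEq K T rfl
  let b : Basis (Fin n) K V :=
    ((bT.prod (finBasis K S)).map π.symm).reindex (finSumFinEquiv.trans (finCongr hdim))
  have hrepr (v : V) (j : Fin (finrank K T)) :
      b.repr v (Fin.cast hdim (Fin.castAdd _ j)) = bT.repr (π v).1 j := by
    rw [Basis.repr_reindex_apply]
    simp [Basis.prod_repr_inl]
  refine ⟨finrank K T, hdim ▸ Nat.le_add_right _ _, b, fun v => ?_⟩
  rw [← Submodule.prodEquivOfIsCompl_symm_apply_fst_eq_zero T S hST.symm,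
    ← bT.repr.map_eq_zero_iff]
  constructor
  · intro h i hi
    exact (hrepr v ⟨i, hi⟩).trans (by rw [h]; rfl)
  · intro h
    ext j
    rw [← hrepr]
    exact h _ j.is_lt

theorem Submodule.exists_det_ne_zero_mem_iff_mulVec_eq_zero {K : Type*} [Field K] {n : ℕ}
    (S : Submodule K (Fin n → K)) :
    ∃ e ≤ n, ∃ M : Matrix (Fin n) (Fin n) K, M.det ≠ 0 ∧
      ∀ v, v ∈ S ↔ ∀ i : Fin n, (i : ℕ) < e → (M *ᵥ v) i = 0 := by
  obtain ⟨e, he, b, hS⟩ := S.exists_finBasis_mem_iff_repr_eq_zero (finrank_fin_fun K)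
  refine ⟨e, he, LinearMap.toMatrix' b.equivFun.toLinearMap, ?_, fun v => ?_⟩
  · simpa [LinearMap.det_toMatrix'] using (LinearEquiv.isUnit_det' b.equivFun).ne_zero
  · simp only [LinearMap.toMatrix'_mulVec]
    exact hS v

theorem Matrix.exists_isUnit_det_map_intCast_eq {n : Type*} [Fintype n] [DecidableEq n]
    (M : Matrix n n (ZMod 2)) (hM : M.det ≠ 0) :
    ∃ A : Matrix n n ℤ, IsUnit A.det ∧ A.map (Int.cast : ℤ → ZMod 2) = M := by
  refine diagonal_transvection_induction_of_det_ne_zero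
    (fun N => ∃ A : Matrix n n ℤ, IsUnit A.det ∧ A.map (Int.cast : ℤ → ZMod 2) = N) M hM ?_ ?_ ?_
  · intro D hD
    have hD1 : D = 1 := by
      have eq_one_of_ne_zero : ∀ x : ZMod 2, x ≠ 0 → x = 1 := by decide
      rw [det_diagonal, Finset.prod_ne_zero_iff] at hD
      exact funext fun i => eq_one_of_ne_zero _ (hD i (Finset.mem_univ i))
    exact ⟨1, by simp, by simp [hD1]⟩
  · intro t
    refine ⟨transvection t.i t.j (t.c.val : ℤ), by simp [det_transvection_of_ne _ _ t.hij], ?_⟩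
    ext k l
    simp only [TransvectionStruct.toMatrix, transvection, map_apply, add_apply, one_apply,
      single_apply]
    split_ifs <;> simp
  · rintro _ _ - - ⟨A, hA, rfl⟩ ⟨B, hB, rfl⟩
    exact ⟨A * B, by simpa using hA.mul hB, Matrix.map_mul (f := Int.castRingHom _)⟩

theorem stmt7_general (a : ℕ) (U : Subgroup (Fin a → ℝˣ)) (hfin : U.FiniteIndex) :
    ∃ (A : Matrix (Fin a) (Fin a) ℤ) (e : ℕ), IsUnit A.det ∧ e ≤ a ∧
      ((fun x : Fin a → ℝˣ => fun i => ∏ j, (x j) ^ (A i j)) '' (U : Set (Fin a → ℝˣ))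
        = {x : Fin a → ℝˣ | ∀ i : Fin a, (i : ℕ) < e → (0 : ℝ) < (x i : ℝ)}) ∧
      (∀ x : Fin a → ℝˣ, (∀ i, (0 : ℝ) < (x i : ℝ)) → x ∈ U) := by
  let S := AddSubgroup.toZModSubmodule 2 (Subgroup.toAddSubgroup' (U.map (signVec (Fin a))))
  obtain ⟨e, he, M, hM, hS⟩ := S.exists_det_ne_zero_mem_iff_mulVec_eq_zero
  obtain ⟨A, hA, rfl⟩ := M.exists_isUnit_det_map_intCast_eq hM
  have hAA : A.map (Int.cast : ℤ → ZMod 2) * A⁻¹.map Int.cast = 1 :=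
    (Matrix.map_mul (f := Int.castRingHom (ZMod 2))).symm.trans (by simp [mul_nonsing_inv A hA])
  refine ⟨A, e, hA, he, ?_, fun x hx => U.mem_of_forall_pos hx⟩
  ext y
  change y ∈ monomialMap A '' U ↔ _
  rw [image_monomialMap hA, Set.mem_preimage, SetLike.mem_coe, U.mem_iff_signVec_mem_map,
    signVec_monomialMap, ← Subgroup.mem_toAddSubgroup', ← AddSubgroup.mem_toZModSubmodule 2, hS]
  simp only [mulVec_mulVec, hAA, one_mulVec, toAdd_signVec_eq_zero_iff]
  rfl

/-- Let `a ≥ 1` and let `U` be an open finite-index subgroup of `(ℝˣ)ᵃ`. Then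
there are a matrix `A ∈ GLₐ(ℤ)` and `e ≤ a` such that the automorphism
`φ_A (x) i = ∏ j, (x j) ^ (A i j)` maps `U` onto the subgroup
`{x : x i > 0 for all i < e}`; in particular `U` contains all tuples with
every coordinate positive. -/
theorem stmt7 (a : ℕ) (ha : 1 ≤ a) (U : Subgroup (Fin a → ℝˣ))
    (hopen : IsOpen (U : Set (Fin a → ℝˣ))) (hfin : U.FiniteIndex) :
    ∃ (A : Matrix (Fin a) (Fin a) ℤ) (e : ℕ), IsUnit A.det ∧ e ≤ a ∧
      ((fun x : Fin a → ℝˣ => fun i => ∏ j, (x j) ^ (A i j)) '' (U : Set (Fin a → ℝˣ))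
        = {x : Fin a → ℝˣ | ∀ i : Fin a, (i : ℕ) < e → (0 : ℝ) < (x i : ℝ)}) ∧
      (∀ x : Fin a → ℝˣ, (∀ i, (0 : ℝ) < (x i : ℝ)) → x ∈ U) :=
  stmt7_general a U hfin
end
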